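/- arXiv:2302.07913 — 10 statements merged into one kernel-verified Lean document; each statement's English description precedes it below -/
import Mathlib

section
/- Let L be a coherent frame and let a, b be compact elements of L. Then the Heyting implication a ⇨ b (computed in L) is compact if and only if there exists a compact element c of L such that for every compact k one has k ≤ c ↔ a ⊓ k ≤ b; and in that case c = a ⇨ b. In particular, if the compact elements of L, as a bounded sublattice, form a Heyting algebra with implication →', then a →' b = a ⇨ b for all compact a, b, so the compact elements form a Heyting subalgebra of L. -/
open CompleteLattice

/-- In a coherent frame `L`, for compact `a, b`, the Heyting implication `a ⇨ b`
is compact iff there is a compact `c` such that for all compact `k`,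
`k ≤ c ↔ a ⊓ k ≤ b`; and any such `c` equals `a ⇨ b`. Hence if the compact
elements form a Heyting algebra with implication `→'`, then `a →' b = a ⇨ b`,
i.e., they form a Heyting subalgebra of `L`. -/
theorem stmt1 {L : Type*} [Order.Frame L]
    (halg : ∀ x : L, x = sSup {k : L | IsCompactElement k ∧ k ≤ x})
    (htop : IsCompactElement (⊤ : L))
    (hmeet : ∀ x y : L, IsCompactElement x → IsCompactElement y → IsCompactElement (x ⊓ y))
    (a b : L) (ha : IsCompactElement a) (hb : IsCompactElement b) :
    (IsCompactElement (a ⇨ b) ↔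
      ∃ c : L, IsCompactElement c ∧ ∀ k : L, IsCompactElement k → (k ≤ c ↔ a ⊓ k ≤ b)) ∧
    (∀ c : L, IsCompactElement c →
      (∀ k : L, IsCompactElement k → (k ≤ c ↔ a ⊓ k ≤ b)) → c = a ⇨ b) := by
  have huniq : ∀ c : L, IsCompactElement c →
      (∀ k : L, IsCompactElement k → (k ≤ c ↔ a ⊓ k ≤ b)) → c = a ⇨ b := by
    intro c hc hprop
    apply le_antisymm
    · rw [le_himp_iff, inf_comm]
      exact (hprop c hc).mp le_rfl
    · conv_lhs => rw [halg (a ⇨ b)]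
      apply _root_.sSup_le
      rintro k ⟨hk, hkle⟩
      exact (hprop k hk).mpr (by rw [inf_comm, ← le_himp_iff]; exact hkle)
  refine ⟨⟨fun h => ⟨a ⇨ b, h, fun k _ => by rw [le_himp_iff, inf_comm]⟩,
    fun ⟨c, hc, hprop⟩ => huniq c hc hprop ▸ hc⟩, huniq⟩
end

section
/- Let X be a compact Priestley space. Then the following are equivalent: (i) ↓U is clopen for every clopen subset U of X (i.e., X is an Esakia space); (ii) ↓(U \ V) is clopen for all clopen upper sets U and V of X. (Condition (ii) expresses that the clopen upper sets, i.e., the compact elements of the frame of open upper sets, are closed under the Heyting implication U ⇨ V = X \ ↓(U \ V) of that frame, so that the frame of open upper sets is a Heyting frame.) -/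
open Set

/-- Point separation: every point of a clopen set in a compact Priestley space lies in a
difference of two clopen upper sets contained in the clopen set. -/
lemma sep_aux {X : Type*} [TopologicalSpace X] [PartialOrder X] [PriestleySpace X]
    [CompactSpace X] {W : Set X} (hW : IsClopen W) (x : X) :
    ∃ U D : Set X, IsClopen U ∧ IsUpperSet U ∧ IsClopen D ∧ IsUpperSet D ∧
      (x ∈ W → x ∈ U \ D) ∧ U \ D ⊆ W := by
  by_cases hx : x ∈ W
  swap
  · exact ⟨∅, ∅, isClopen_empty, isUpperSet_empty, isClopen_empty, isUpperSet_empty,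
      fun h => absurd h hx, by simp⟩
  have hsep : ∀ y : X, ∃ S : Set X, IsClopen S ∧ (IsUpperSet S ∨ IsLowerSet S) ∧
      x ∈ S ∧ (y ∈ Wᶜ → y ∉ S) := by
    intro y
    by_cases hy : y ∈ Wᶜ
    · have hxy : x ≠ y := fun h => hy (h ▸ hx)
      obtain ⟨S, h1, h2, h3, h4⟩ := exists_isClopen_upper_or_lower_of_ne hxy
      exact ⟨S, h1, h2, h3, fun _ => h4⟩
    · exact ⟨univ, isClopen_univ, Or.inl isUpperSet_univ, mem_univ x, fun h => absurd h hy⟩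
  choose S hScl hSul hxS hyS using hsep
  have hKc : IsCompact Wᶜ := (hW.isOpen.isClosed_compl).isCompact
  have hcover : Wᶜ ⊆ ⋃ y : X, (S y)ᶜ := fun y hy =>
    mem_iUnion.2 ⟨y, hyS y hy⟩
  obtain ⟨t, ht⟩ := hKc.elim_finite_subcover (fun y => (S y)ᶜ)
    (fun y => (hScl y).compl.isOpen) hcover
  classical
  set U : Set X := ⋂ y ∈ t, (if IsUpperSet (S y) then S y else univ) with hU
  set L : Set X := ⋂ y ∈ t, (if IsUpperSet (S y) then univ else S y) with hL
  have hinter : U ∩ L = ⋂ y ∈ t, S y := by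
    rw [hU, hL]
    ext z
    simp only [mem_inter_iff, mem_iInter]
    constructor
    · rintro ⟨h1, h2⟩ y hy
      by_cases h : IsUpperSet (S y)
      · have := h1 y hy; simpa [h] using this
      · have := h2 y hy; simpa [h] using this
    · intro hz
      exact ⟨fun y hy => by by_cases h : IsUpperSet (S y) <;> simp [h, hz y hy],
             fun y hy => by by_cases h : IsUpperSet (S y) <;> simp [h, hz y hy]⟩
  refine ⟨U, Lᶜ, ?_, ?_, ?_, ?_, fun _ => ?_, ?_⟩
  · exact isClopen_biInter_finset fun y _ => by
      by_cases h : IsUpperSet (S y) <;> simp [h, hScl y, isClopen_univ]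
  · exact isUpperSet_iInter₂ fun y _ => by
      by_cases h : IsUpperSet (S y) <;> simp [h, isUpperSet_univ]
  · exact (isClopen_biInter_finset fun y _ => by
      by_cases h : IsUpperSet (S y) <;> simp [h, hScl y, isClopen_univ]).compl
  · refine IsLowerSet.compl ?_
    exact isLowerSet_iInter₂ fun y _ => by
      by_cases h : IsUpperSet (S y)
      · simp [h, isLowerSet_univ]
      · simpa [h] using (hSul y).resolve_left h
  · have : x ∈ U ∩ L := by
      rw [hinter]; exact mem_iInter₂.2 fun y _ => hxS y
    exact ⟨this.1, fun hxL => hxL this.2⟩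
  · intro z hz
    have hz' : z ∈ U ∩ L := ⟨hz.1, not_not.1 hz.2⟩
    rw [hinter] at hz'
    by_contra hzW
    obtain ⟨y, hyt, hySy⟩ := by
      have := ht hzW
      simpa using this
    exact hySy (mem_iInter₂.1 hz' y hyt)

/-- A compact Priestley space `X` is an Esakia space (the lower closure of every
clopen set is clopen) iff `↓(U \ V)` is clopen for all clopen upper sets `U, V`,
i.e., iff the clopen upper sets are closed under the Heyting implication
`U ⇨ V = X \ ↓(U \ V)` of the frame of open upper sets. -/
theorem stmt2 {X : Type*} [TopologicalSpace X] [PartialOrder X] [PriestleySpace X]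
    [CompactSpace X] :
    (∀ U : Set X, IsClopen U → IsClopen (lowerClosure U : Set X)) ↔
    (∀ U V : Set X, IsClopen U → IsUpperSet U → IsClopen V → IsUpperSet V →
      IsClopen (lowerClosure (U \ V) : Set X)) := by
  constructor
  · intro h U V hU _ hV _
    exact h _ (hU.diff hV)
  · intro h W hW
    choose U D hUcl hUup hDcl hDup hmem hsub using sep_aux hW
    have hWc : IsCompact W := hW.isClosed.isCompact
    have hcover : W ⊆ ⋃ x : X, U x \ D x := fun x hx => mem_iUnion.2 ⟨x, hmem x hx⟩
    obtain ⟨t, ht⟩ := hWc.elim_finite_subcover (fun x => U x \ D x)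
      (fun x => (hUcl x).isOpen.sdiff (hDcl x).isClosed) hcover
    have hWeq : W = ⋃ x ∈ t, U x \ D x :=
      Subset.antisymm ht (iUnion₂_subset fun x _ => hsub x)
    have hlc : (lowerClosure W : Set X) = ⋃ x ∈ t, (lowerClosure (U x \ D x) : Set X) := by
      rw [hWeq]
      simp_rw [lowerClosure_iUnion]
      simp [LowerSet.coe_iSup₂, LowerSet.coe_iSup]
    rw [hlc]
    exact isClopen_biUnion_finset fun x _ =>
      h _ _ (hUcl x) (hUup x) (hDcl x) (hDup x)
end

section
/- In a compact Priestley space X, every clopen subset of X is a finite union of sets of the form U \ V where U and V are clopen upper sets. -/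
/-- Key step: each point of a clopen set `C` lies in a difference `U \ V` of clopen
upper sets contained in `C`. -/
theorem stmt3_aux {X : Type*} [TopologicalSpace X] [PartialOrder X] [PriestleySpace X]
    [CompactSpace X] (C : Set X) (hC : IsClopen C) (x : X) (hx : x ∈ C) :
    ∃ U V : Set X, IsClopen U ∧ IsUpperSet U ∧ IsClopen V ∧ IsUpperSet V ∧
      x ∈ U \ V ∧ U \ V ⊆ C := by
  have hsep : ∀ y : X, y ∈ Cᶜ → ∃ (A : Set X) (b : Bool), IsClopen A ∧ IsUpperSet A ∧
      y ∈ (cond b A Aᶜ) ∧ x ∉ (cond b A Aᶜ) := by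
    intro y hy
    have hxy : x ≠ y := fun h => hy (h ▸ hx)
    by_cases hle : x ≤ y
    · have : ¬ y ≤ x := fun h => hxy (le_antisymm hle h)
      obtain ⟨A, hA, hAup, hyA, hxA⟩ := PriestleySpace.priestley this
      exact ⟨A, true, hA, hAup, hyA, hxA⟩
    · have : ¬ x ≤ y := hle
      obtain ⟨A, hA, hAup, hxA, hyA⟩ := PriestleySpace.priestley this
      exact ⟨A, false, hA, hAup, by simpa using hyA, by simpa using hxA⟩
  choose! W b hW hWup hyW hxW using hsep
  have hCc : IsCompact Cᶜ := hC.compl.isClosed.isCompact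
  have hcover : Cᶜ ⊆ ⋃ y ∈ Cᶜ, cond (b y) (W y) (W y)ᶜ := fun y hy =>
    Set.mem_biUnion hy (hyW y hy)
  have hopen : ∀ y ∈ Cᶜ, IsOpen (cond (b y) (W y) (W y)ᶜ) := by
    intro y hy
    cases hb : b y
    · exact (hW y hy).compl.isOpen
    · exact (hW y hy).isOpen
  obtain ⟨t, htsub, htfin, htcov⟩ := hCc.elim_finite_subcover_image hopen hcover
  classical
  refine ⟨⋂ y ∈ {y ∈ t | b y = false}, W y, ⋃ y ∈ {y ∈ t | b y = true}, W y,
    ?_, ?_, ?_, ?_, ⟨?_, ?_⟩, ?_⟩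
  · exact (htfin.subset (Set.sep_subset _ _)).isClopen_biInter
      fun y hy => hW y (htsub hy.1)
  · exact isUpperSet_iInter₂ fun y hy => hWup y (htsub hy.1)
  · exact (htfin.subset (Set.sep_subset _ _)).isClopen_biUnion
      fun y hy => hW y (htsub hy.1)
  · exact isUpperSet_iUnion₂ fun y hy => hWup y (htsub hy.1)
  · -- x ∈ ⋂ ...
    refine Set.mem_biInter fun y hy => ?_
    have := hxW y (htsub hy.1)
    rw [hy.2] at this
    simpa using this
  · -- x ∉ ⋃ ...
    intro hxmem
    obtain ⟨y, hy, hxy⟩ := Set.mem_iUnion₂.mp hxmem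
    have := hxW y (htsub hy.1)
    rw [hy.2] at this
    exact this hxy
  · -- U \ V ⊆ C
    intro z hz
    by_contra hzC
    have hzCc : z ∈ Cᶜ := hzC
    obtain ⟨y, hy, hzy⟩ := Set.mem_iUnion₂.mp (htcov hzCc)
    cases hb : b y
    · rw [hb] at hzy
      exact hzy (Set.mem_iInter₂.mp hz.1 y ⟨hy, hb⟩)
    · rw [hb] at hzy
      exact hz.2 (Set.mem_biUnion ⟨hy, hb⟩ hzy)

/-- In a compact Priestley space, every clopen set is a finite union of sets
`U \ V` with `U, V` clopen upper sets. -/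
theorem stmt3 {X : Type*} [TopologicalSpace X] [PartialOrder X] [PriestleySpace X]
    [CompactSpace X] (C : Set X) (hC : IsClopen C) :
    ∃ (n : ℕ) (U V : Fin n → Set X),
      (∀ i, IsClopen (U i) ∧ IsUpperSet (U i) ∧ IsClopen (V i) ∧ IsUpperSet (V i)) ∧
      C = ⋃ i, U i \ V i := by
  classical
  choose! U V hUcl hUup hVcl hVup hmem hsub using stmt3_aux C hC
  have hcover : C ⊆ ⋃ x ∈ C, U x \ V x := fun x hx => Set.mem_biUnion hx (hmem x hx)
  have hopen : ∀ x ∈ C, IsOpen (U x \ V x) :=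
    fun x hx => (hUcl x hx).isOpen.sdiff (hVcl x hx).isClosed
  obtain ⟨s, hssub, hsfin, hscov⟩ :=
    hC.isClosed.isCompact.elim_finite_subcover_image hopen hcover
  let t := hsfin.toFinset
  have htsub : ∀ y ∈ t, y ∈ C := fun y hy => hssub (hsfin.mem_toFinset.mp hy)
  let e : Fin t.card ≃ t := t.equivFin.symm
  refine ⟨t.card, fun i => U (e i), fun i => V (e i), fun i => ?_, ?_⟩
  · have h := htsub _ (e i).2
    exact ⟨hUcl _ h, hUup _ h, hVcl _ h, hVup _ h⟩
  · apply Set.Subset.antisymm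
    · intro z hz
      obtain ⟨y, hy, hzy⟩ := Set.mem_iUnion₂.mp (hscov hz)
      have hyt : y ∈ t := hsfin.mem_toFinset.mpr hy
      refine Set.mem_iUnion.mpr ⟨e.symm ⟨y, hyt⟩, ?_⟩
      simpa using hzy
    · intro z hz
      obtain ⟨i, hi⟩ := Set.mem_iUnion.mp hz
      exact hsub _ (htsub _ (e i).2) hi
end

section
/- Let X and Y be compact Priestley spaces and let f : X → Y be continuous and monotone. If f⁻¹(↓ cl E) = ↓ cl (f⁻¹ E) for every E-constructible subset E of Y, then f⁻¹(↓U) = ↓(f⁻¹ U) for every clopen subset U of Y (i.e., f is an Esakia morphism). -/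
open Set

/-- A set is E-constructible if it is a finite union of sets `U \ V` with
`U, V` open upper sets. -/
def EConstructible {Y : Type*} [TopologicalSpace Y] [Preorder Y] (E : Set Y) : Prop :=
  ∃ (n : ℕ) (U V : Fin n → Set Y),
    (∀ i, IsOpen (U i) ∧ IsUpperSet (U i) ∧ IsOpen (V i) ∧ IsUpperSet (V i)) ∧
    E = ⋃ i, U i \ V i


lemma key_sep {Y : Type*} [TopologicalSpace Y] [PartialOrder Y] [PriestleySpace Y]
    [CompactSpace Y] {U : Set Y} (hU : IsClopen U) {x : Y} (hx : x ∈ U) :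
    ∃ A B : Set Y, IsClopen A ∧ IsUpperSet A ∧ IsClopen B ∧ IsUpperSet B ∧
      x ∈ A \ B ∧ A \ B ⊆ U := by
  have hPQ : ∀ y : ↥Uᶜ, ∃ P Q : Set Y, IsClopen P ∧ IsUpperSet P ∧ IsClopen Q ∧ IsUpperSet Q ∧
      x ∈ P \ Q ∧ (y : Y) ∉ P \ Q := by
    rintro ⟨y, hy⟩
    by_cases hxy : x ≤ y
    · have hyx : ¬ y ≤ x := fun hyx => hy (le_antisymm hyx hxy ▸ hx)
      obtain ⟨W, hW, hWu, hyW, hxW⟩ := exists_isClopen_upper_of_not_le hyx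
      exact ⟨univ, W, isClopen_univ, isUpperSet_univ, hW, hWu,
        ⟨mem_univ _, hxW⟩, fun hc => hc.2 hyW⟩
    · obtain ⟨W, hW, hWu, hxW, hyW⟩ := exists_isClopen_upper_of_not_le hxy
      exact ⟨W, ∅, hW, hWu, isClopen_empty, isUpperSet_empty,
        ⟨hxW, notMem_empty x⟩, fun hc => hyW hc.1⟩
  choose P Q hPc hPu hQc hQu hxPQ hyPQ using hPQ
  have hcov : Uᶜ ⊆ ⋃ y : ↥Uᶜ, (P y \ Q y)ᶜ := fun y hy =>
    mem_iUnion.2 ⟨⟨y, hy⟩, hyPQ ⟨y, hy⟩⟩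
  obtain ⟨t, ht⟩ := (hU.isOpen.isClosed_compl.isCompact).elim_finite_subcover
    (fun y : ↥Uᶜ => (P y \ Q y)ᶜ)
    (fun y => ((hPc y).diff (hQc y)).isClosed.isOpen_compl) hcov
  refine ⟨⋂ y ∈ t, P y, ⋃ y ∈ t, Q y,
    isClopen_biInter_finset fun y _ => hPc y,
    isUpperSet_iInter₂ fun y _ => hPu y,
    isClopen_biUnion_finset fun y _ => hQc y,
    isUpperSet_iUnion₂ fun y _ => hQu y, ?_, ?_⟩
  · exact ⟨mem_iInter₂.2 fun y _ => (hxPQ y).1,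
      fun hc => by obtain ⟨y, _, hy⟩ := mem_iUnion₂.1 hc; exact (hxPQ y).2 hy⟩
  · rintro z ⟨hzA, hzB⟩
    by_contra hzU
    obtain ⟨y, hyt, hy⟩ := mem_iUnion₂.1 (ht hzU)
    exact hy ⟨mem_iInter₂.1 hzA y hyt, fun hq => hzB (mem_iUnion₂.2 ⟨y, hyt, hq⟩)⟩

lemma isClopen_econstructible {Y : Type*} [TopologicalSpace Y] [PartialOrder Y]
    [PriestleySpace Y] [CompactSpace Y] {U : Set Y} (hU : IsClopen U) : EConstructible U := by
  have hAB : ∀ x : ↥U, ∃ A B : Set Y, IsClopen A ∧ IsUpperSet A ∧ IsClopen B ∧ IsUpperSet B ∧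
      (x : Y) ∈ A \ B ∧ A \ B ⊆ U := fun x => key_sep hU x.2
  choose A B hAc hAu hBc hBu hmem hsub using hAB
  have hcov : U ⊆ ⋃ x : ↥U, A x \ B x := fun x hx => mem_iUnion.2 ⟨⟨x, hx⟩, hmem ⟨x, hx⟩⟩
  obtain ⟨t, ht⟩ := (hU.isClosed.isCompact).elim_finite_subcover
    (fun x : ↥U => A x \ B x) (fun x => (hAc x).isOpen.sdiff (hBc x).isClosed) hcov
  refine ⟨t.card, fun i => A (t.equivFin.symm i), fun i => B (t.equivFin.symm i),
    fun i => ⟨(hAc _).isOpen, hAu _, (hBc _).isOpen, hBu _⟩, ?_⟩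
  ext z
  constructor
  · intro hz
    obtain ⟨x, hxt, hx⟩ := mem_iUnion₂.1 (ht hz)
    refine mem_iUnion.2 ⟨t.equivFin ⟨x, hxt⟩, ?_⟩
    simpa using hx
  · intro hz
    obtain ⟨i, hi⟩ := mem_iUnion.1 hz
    exact hsub _ hi

/-- If a continuous monotone map `f` between compact Priestley spaces satisfies
`f⁻¹(↓ cl E) = ↓ cl (f⁻¹ E)` for every E-constructible `E`, then
`f⁻¹(↓U) = ↓(f⁻¹ U)` for every clopen `U`, i.e., `f` is an Esakia morphism. -/
theorem stmt4 {X Y : Type*} [TopologicalSpace X] [PartialOrder X] [PriestleySpace X]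
    [CompactSpace X] [TopologicalSpace Y] [PartialOrder Y] [PriestleySpace Y] [CompactSpace Y]
    (f : X → Y) (hf : Continuous f) (hmono : Monotone f)
    (h : ∀ E : Set Y, EConstructible E →
      f ⁻¹' (lowerClosure (closure E) : Set Y) = (lowerClosure (closure (f ⁻¹' E)) : Set X)) :
    ∀ U : Set Y, IsClopen U →
      f ⁻¹' (lowerClosure U : Set Y) = (lowerClosure (f ⁻¹' U) : Set X) := by
  intro U hU
  have hE := h U (isClopen_econstructible hU)
  rwa [hU.isClosed.closure_eq, (hU.preimage hf).isClosed.closure_eq] at hE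
end

section
/- Let X be a compact Priestley space and let U and V be open upper sets of X. Then W₀ := X \ ↓ cl (U \ V) is an open upper set, U ∩ W₀ ⊆ V, and every open upper set W with U ∩ W ⊆ V satisfies W ⊆ W₀. In other words, X \ ↓ cl (U \ V) is the Heyting implication U ⇨ V in the frame of open upper sets of X. -/
open Set

/-- In a Priestley space, the lower closure of a compact set is closed. -/
lemma isClosed_lowerClosure_of_isCompact {X : Type*} [TopologicalSpace X] [Preorder X]
    [PriestleySpace X] {K : Set X} (hK : IsCompact K) :
    IsClosed (lowerClosure K : Set X) := by
  rw [← isOpen_compl_iff]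
  rw [isOpen_iff_forall_mem_open]
  intro x hx
  -- for each y ∈ K, x ≰ y, get clopen upper set containing x, missing y
  have hxy : ∀ y ∈ K, ¬ x ≤ y := by
    intro y hy hle
    exact hx ⟨y, hy, hle⟩
  choose! C hC hCu hxC hyC using fun y (hy : y ∈ K) => exists_isClopen_upper_of_not_le (hxy y hy)
  -- the complements (C y)ᶜ cover K
  obtain ⟨t, ht⟩ := hK.elim_finite_subcover (fun y : K => (C y)ᶜ)
    (fun y => (hC y y.2).compl.isOpen)
    (fun y hy => mem_iUnion.2 ⟨⟨y, hy⟩, hyC y hy⟩)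
  refine ⟨⋂ y ∈ t, C y, ?_, ?_, ?_⟩
  · -- this set avoids lowerClosure K
    intro z hz hzK
    obtain ⟨y, hyK, hzy⟩ := hzK
    obtain ⟨i, hi, hyi⟩ := mem_iUnion₂.1 (ht hyK)
    exact hyi (hCu i.1 i.2 hzy (by simpa using mem_iInter₂.1 hz i hi))
  · exact isOpen_biInter_finset fun i _ => (hC i.1 i.2).isOpen
  · exact mem_iInter₂.2 fun i _ => hxC i.1 i.2

/-- In a compact Priestley space `X`, for open upper sets `U, V`, the set
`W₀ = X \ ↓ cl (U \ V)` is an open upper set, satisfies `U ∩ W₀ ⊆ V`, and is the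
largest open upper set `W` with `U ∩ W ⊆ V`; i.e., it is the Heyting implication
`U ⇨ V` in the frame of open upper sets. -/
theorem stmt5 {X : Type*} [TopologicalSpace X] [PartialOrder X] [PriestleySpace X]
    [CompactSpace X] (U V : Set X) (hU : IsOpen U) (hUu : IsUpperSet U)
    (hV : IsOpen V) (hVu : IsUpperSet V) :
    IsOpen ((lowerClosure (closure (U \ V)) : Set X)ᶜ) ∧
    IsUpperSet ((lowerClosure (closure (U \ V)) : Set X)ᶜ) ∧
    U ∩ (lowerClosure (closure (U \ V)) : Set X)ᶜ ⊆ V ∧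
    (∀ W : Set X, IsOpen W → IsUpperSet W → U ∩ W ⊆ V →
      W ⊆ (lowerClosure (closure (U \ V)) : Set X)ᶜ) := by
  refine ⟨?_, ?_, ?_, ?_⟩
  · exact (isClosed_lowerClosure_of_isCompact isClosed_closure.isCompact).isOpen_compl
  · exact (lowerClosure _).lower.compl
  · rintro x ⟨hxU, hxW⟩
    by_contra hxV
    exact hxW ⟨x, subset_closure ⟨hxU, hxV⟩, le_refl x⟩
  · intro W _ hWu hWV x hxW hxL
    obtain ⟨y, hy, hxy⟩ := hxL
    have hcl : closure (U \ V) ⊆ Wᶜ := by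
      apply closure_minimal ?_ (isClosed_compl_iff.2 ‹IsOpen W›)
      rintro z ⟨hzU, hzV⟩ hzW
      exact hzV (hWV ⟨hzU, hzW⟩)
    exact hcl hy (hWu hxy hxW)
end

section
/- Let X and Y be compact Priestley spaces and let f : X → Y be continuous and monotone. Then f⁻¹(↓ cl (U \ V)) = ↓ cl (f⁻¹(U \ V)) for all open upper sets U and V of Y if and only if f⁻¹(↓ cl E) = ↓ cl (f⁻¹ E) for every E-constructible subset E of Y. (Equivalently, by the formula U ⇨ V = X \ ↓ cl (U \ V) for implication in the frame of open upper sets, f⁻¹ : OpUp(Y) → OpUp(X) preserves Heyting implication iff f⁻¹ commutes with ↓ cl on E-constructible sets.) -/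
/-- For a continuous monotone map `f` between compact Priestley spaces,
`f⁻¹(↓ cl (U \ V)) = ↓ cl (f⁻¹(U \ V))` for all open upper sets `U, V` of `Y`
iff `f⁻¹(↓ cl E) = ↓ cl (f⁻¹ E)` for every E-constructible `E` of `Y`;
equivalently, `f⁻¹ : OpUp(Y) → OpUp(X)` preserves Heyting implication iff
`f⁻¹` commutes with `↓ cl` on E-constructible sets. -/
theorem stmt6 {X Y : Type*} [TopologicalSpace X] [PartialOrder X] [PriestleySpace X]
    [CompactSpace X] [TopologicalSpace Y] [PartialOrder Y] [PriestleySpace Y] [CompactSpace Y]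
    (f : X → Y) (hf : Continuous f) (hmono : Monotone f) :
    (∀ U V : Set Y, IsOpen U → IsUpperSet U → IsOpen V → IsUpperSet V →
      f ⁻¹' (lowerClosure (closure (U \ V)) : Set Y) =
        (lowerClosure (closure (f ⁻¹' (U \ V))) : Set X)) ↔
    (∀ E : Set Y, EConstructible E →
      f ⁻¹' (lowerClosure (closure E) : Set Y) =
        (lowerClosure (closure (f ⁻¹' E)) : Set X)) := by
  constructor
  · rintro h E ⟨n, U, V, hUV, rfl⟩
    rw [closure_iUnion_of_finite, lowerClosure_iUnion, LowerSet.coe_iSup,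
      Set.preimage_iUnion, Set.preimage_iUnion, closure_iUnion_of_finite,
      lowerClosure_iUnion, LowerSet.coe_iSup]
    exact Set.iUnion_congr fun i => h (U i) (V i) (hUV i).1 (hUV i).2.1 (hUV i).2.2.1 (hUV i).2.2.2
  · intro h U V hU hU' hV hV'
    refine h (U \ V) ⟨1, fun _ => U, fun _ => V, fun _ => ⟨hU, hU', hV, hV'⟩,
      (Set.iUnion_const _).symm⟩
end

section
/- Let X and Y be compact Priestley spaces and let f : X → Y be continuous and monotone. For a subset S, let m(S) denote the union of all open upper sets contained in S (the largest open upper set contained in S, which is the infimum of a family of open upper sets in the frame of open upper sets when S is their intersection). Then the following are equivalent: (i) for every family 𝒰 of open upper sets of Y, f⁻¹(m(⋂₀ 𝒰)) = m(⋂_{U ∈ 𝒰} f⁻¹ U) (i.e., f⁻¹ : OpUp(Y) → OpUp(X) preserves arbitrary meets); (ii) f⁻¹(↓ cl D) = ↓ cl (f⁻¹ D) for every lower set D of Y. -/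
open Set

/-- The largest open upper set contained in `S`: the union of all open upper
sets contained in `S`. -/
def largestOpenUpper {X : Type*} [TopologicalSpace X] [Preorder X] (S : Set X) : Set X :=
  ⋃₀ {V : Set X | IsOpen V ∧ IsUpperSet V ∧ V ⊆ S}

section Aux

variable {α : Type*} [TopologicalSpace α] [PartialOrder α] [PriestleySpace α]

/-- In a Priestley space, the order relation is closed. -/
lemma priestley_isClosed_le : IsClosed { p : α × α | p.1 ≤ p.2 } := by
  rw [← isOpen_compl_iff, isOpen_iff_forall_mem_open]
  rintro ⟨x, y⟩ hxy
  obtain ⟨U, hU, hUup, hxU, hyU⟩ := exists_isClopen_upper_of_not_le (hxy : ¬ x ≤ y)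
  refine ⟨U ×ˢ Uᶜ, ?_, (hU.isOpen.prod hU.compl.isOpen), ⟨hxU, hyU⟩⟩
  rintro ⟨a, b⟩ ⟨haU, hbU⟩ (hab : a ≤ b)
  exact hbU (hUup hab haU)

/-- In a Priestley space, `Iic x` is closed. -/
lemma priestley_isClosed_Iic (x : α) : IsClosed (Iic x) := by
  rw [← isOpen_compl_iff, isOpen_iff_forall_mem_open]
  intro z hz
  obtain ⟨U, hU, hUup, hzU, hxU⟩ := exists_isClopen_upper_of_not_le (hz : ¬ z ≤ x)
  exact ⟨U, fun u huU (hux : u ≤ x) ↦ hxU (hUup hux huU), hU.isOpen, hzU⟩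

variable [CompactSpace α]

/-- In a compact Priestley space, the lower closure of a closed set is closed. -/
lemma priestley_isClosed_lowerClosure {A : Set α} (hA : IsClosed A) :
    IsClosed (lowerClosure A : Set α) := by
  have him : (lowerClosure A : Set α) =
      Prod.fst '' ({ p : α × α | p.1 ≤ p.2 } ∩ univ ×ˢ A) := by
    ext x
    constructor
    · rintro ⟨a, haA, hxa⟩
      exact ⟨(x, a), ⟨hxa, ⟨trivial, haA⟩⟩, rfl⟩
    · rintro ⟨⟨x', a⟩, ⟨hle, ⟨-, haA⟩⟩, rfl⟩
      exact ⟨a, haA, hle⟩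
  rw [him]
  have hcl : IsClosed ({ p : α × α | p.1 ≤ p.2 } ∩ univ ×ˢ A) :=
    priestley_isClosed_le.inter (isClosed_univ.prod hA)
  exact (hcl.isCompact.image continuous_fst).isClosed

/-- Key: the largest open upper set inside `Dᶜ` is the complement of `↓ cl D`. -/
lemma largestOpenUpper_compl (D : Set α) :
    largestOpenUpper Dᶜ = (lowerClosure (closure D) : Set α)ᶜ := by
  apply subset_antisymm
  · rintro x hx
    obtain ⟨V, ⟨hVo, hVu, hVD⟩, hxV⟩ := hx
    have hVc : (lowerClosure (closure D) : Set α) ⊆ Vᶜ := by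
      apply lowerClosure_min
      · exact closure_minimal (fun y hy hyV ↦ hVD hyV hy) hVo.isClosed_compl
      · exact hVu.compl
    exact fun hmem ↦ hVc hmem hxV
  · intro x hx
    refine ⟨(lowerClosure (closure D) : Set α)ᶜ, ⟨?_, ?_, ?_⟩, hx⟩
    · exact (priestley_isClosed_lowerClosure isClosed_closure).isOpen_compl
    · exact (lowerClosure (closure D)).lower.compl
    · exact fun y hy hyD ↦ hy (subset_lowerClosure (subset_closure hyD))

/-- An upper set in a Priestley space is the intersection of the open upper sets
containing it. -/
lemma upperSet_eq_sInter_openUpper {E : Set α} (hE : IsUpperSet E) :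
    ⋂₀ {U : Set α | (IsOpen U ∧ IsUpperSet U) ∧ E ⊆ U} = E := by
  apply subset_antisymm
  · intro x hx
    by_contra hxE
    have hEU : E ⊆ (Iic x)ᶜ := fun e heE (hex : e ≤ x) ↦ hxE (hE hex heE)
    exact (hx _ ⟨⟨(priestley_isClosed_Iic x).isOpen_compl,
      (isLowerSet_Iic x).compl⟩, hEU⟩) le_rfl
  · exact fun x hx U hU ↦ hU.2 hx

end Aux

/-- For a continuous monotone map `f` between compact Priestley spaces,
`f⁻¹ : OpUp(Y) → OpUp(X)` preserves arbitrary meets (computed as the largest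
open upper set contained in the intersection) iff
`f⁻¹(↓ cl D) = ↓ cl (f⁻¹ D)` for every lower set `D` of `Y`. -/
theorem stmt7 {X Y : Type*} [TopologicalSpace X] [PartialOrder X] [PriestleySpace X]
    [CompactSpace X] [TopologicalSpace Y] [PartialOrder Y] [PriestleySpace Y] [CompactSpace Y]
    (f : X → Y) (hf : Continuous f) (hmono : Monotone f) :
    (∀ 𝒰 : Set (Set Y), (∀ U ∈ 𝒰, IsOpen U ∧ IsUpperSet U) →
      f ⁻¹' largestOpenUpper (⋂₀ 𝒰) = largestOpenUpper (⋂ U ∈ 𝒰, f ⁻¹' U)) ↔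
    (∀ D : Set Y, IsLowerSet D →
      f ⁻¹' (lowerClosure (closure D) : Set Y) =
        (lowerClosure (closure (f ⁻¹' D)) : Set X)) := by
  constructor
  · intro h D hD
    have key := h {U : Set Y | (IsOpen U ∧ IsUpperSet U) ∧ Dᶜ ⊆ U} (fun U hU ↦ hU.1)
    rw [upperSet_eq_sInter_openUpper hD.compl] at key
    have hInter : (⋂ U ∈ {U : Set Y | (IsOpen U ∧ IsUpperSet U) ∧ Dᶜ ⊆ U}, f ⁻¹' U)
        = (f ⁻¹' D)ᶜ := by
      rw [← preimage_iInter₂, ← sInter_eq_biInter,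
        upperSet_eq_sInter_openUpper hD.compl, preimage_compl]
    rw [hInter, largestOpenUpper_compl, largestOpenUpper_compl, preimage_compl] at key
    exact compl_injective key
  · intro h 𝒰 h𝒰
    have hDl : IsLowerSet (⋂₀ 𝒰)ᶜ :=
      (isUpperSet_sInter (fun U hU ↦ (h𝒰 U hU).2)).compl
    have h2 : (⋂ U ∈ 𝒰, f ⁻¹' U) = ((f ⁻¹' (⋂₀ 𝒰)ᶜ))ᶜ := by
      rw [preimage_compl, compl_compl, preimage_sInter]
    have h3 : f ⁻¹' largestOpenUpper (⋂₀ 𝒰) =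
        (lowerClosure (closure (f ⁻¹' (⋂₀ 𝒰)ᶜ)) : Set X)ᶜ := by
      rw [show largestOpenUpper (⋂₀ 𝒰) = largestOpenUpper (((⋂₀ 𝒰)ᶜ)ᶜ) by
        rw [compl_compl], largestOpenUpper_compl, preimage_compl, h _ hDl]
    rw [h3, h2, largestOpenUpper_compl]
end

section
/- Let X be a compact Priestley space and let S be an open subset of X. Then the largest upper set contained in S, namely □S := X \ ↓(X \ S), is open. -/
/-- In a compact Priestley space, for open `S`, the largest upper set contained
in `S`, namely `□S = X \ ↓(X \ S)`, is open (and is indeed the largest upper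
set contained in `S`). -/
theorem stmt8 {X : Type*} [TopologicalSpace X] [PartialOrder X] [PriestleySpace X]
    [CompactSpace X] (S : Set X) (hS : IsOpen S) :
    IsOpen ((lowerClosure Sᶜ : Set X)ᶜ) ∧
    IsUpperSet ((lowerClosure Sᶜ : Set X)ᶜ) ∧
    (lowerClosure Sᶜ : Set X)ᶜ ⊆ S ∧
    (∀ T : Set X, IsUpperSet T → T ⊆ S → T ⊆ (lowerClosure Sᶜ : Set X)ᶜ) := by
  refine ⟨?_, (lowerClosure Sᶜ).lower.compl, ?_, ?_⟩
  · rw [isOpen_iff_mem_nhds]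
    intro x hx
    have hxy : ∀ y : (Sᶜ : Set X), ¬ x ≤ (y : X) := by
      rintro ⟨y, hy⟩ hle
      exact hx ⟨y, hy, hle⟩
    choose U hUclopen hUup hxU hyU using fun y => exists_isClopen_upper_of_not_le (hxy y)
    have hScomp : IsCompact (Sᶜ : Set X) := hS.isClosed_compl.isCompact
    have hcover : Sᶜ ⊆ ⋃ y : (Sᶜ : Set X), (U y)ᶜ := fun y hy =>
      Set.mem_iUnion.2 ⟨⟨y, hy⟩, hyU ⟨y, hy⟩⟩
    obtain ⟨t, hcov⟩ := hScomp.elim_finite_subcover (fun y => (U y)ᶜ)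
      (fun y => (hUclopen y).1.isOpen_compl) hcover
    have hV : IsOpen (⋂ y ∈ t, U y) :=
      isOpen_biInter_finset (fun y _ => (hUclopen y).2)
    refine Filter.mem_of_superset (hV.mem_nhds (Set.mem_biInter fun y _ => hxU y)) ?_
    intro z hz hzlc
    obtain ⟨w, hw, hzw⟩ := hzlc
    obtain ⟨y, hy, hwU⟩ := Set.mem_iUnion₂.1 (hcov hw)
    exact hwU (hUup y hzw (Set.mem_iInter₂.1 hz y hy))
  · intro x hx
    by_contra h
    exact hx (subset_lowerClosure h)
  · intro T hTup hTS x hxT hxlc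
    obtain ⟨y, hy, hxy⟩ := hxlc
    exact hy (hTS (hTup hxy hxT))
end

section
/- Let X be a compact Priestley space and let 𝒰 be a family of open upper sets of X. Then the largest open upper set contained in ⋂₀ 𝒰 equals the largest upper set contained in the interior of ⋂₀ 𝒰; that is, ⋃₀ {V : V is an open upper set and V ⊆ ⋂₀ 𝒰} = X \ ↓(X \ interior(⋂₀ 𝒰)). (This computes the infimum of 𝒰 in the frame of open upper sets of X.) -/
open Set

/-- In a compact Priestley space, if `I` is open and `Ici x ⊆ I`, then there is a
clopen upper set `V` with `x ∈ V ⊆ I`. -/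
lemma aux_clopen_upper {X : Type*} [TopologicalSpace X] [PartialOrder X] [PriestleySpace X]
    [CompactSpace X] {I : Set X} (hI : IsOpen I) {x : X} (hx : Ici x ⊆ I) :
    ∃ V : Set X, IsClopen V ∧ IsUpperSet V ∧ x ∈ V ∧ V ⊆ I := by
  have key : ∀ y : (Iᶜ : Set X), ∃ U : Set X, IsClopen U ∧ IsUpperSet U ∧ x ∈ U ∧ (y : X) ∉ U := by
    rintro ⟨y, hy⟩
    exact exists_isClopen_upper_of_not_le (fun h => hy (hx h))
  choose U hUclopen hUupper hxU hyU using key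
  have hcov : Iᶜ ⊆ ⋃ y : (Iᶜ : Set X), (U y)ᶜ := by
    intro z hz
    exact mem_iUnion.2 ⟨⟨z, hz⟩, hyU ⟨z, hz⟩⟩
  have hcpt : IsCompact (Iᶜ : Set X) := hI.isClosed_compl.isCompact
  obtain ⟨t, ht⟩ := hcpt.elim_finite_subcover (fun y : (Iᶜ : Set X) => (U y)ᶜ)
    (fun y => (hUclopen y).isClosed.isOpen_compl) hcov
  refine ⟨⋂ y ∈ t, U y, ?_, ?_, ?_, ?_⟩
  · exact (isClopen_biInter_finset fun y _ => hUclopen y)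
  · exact isUpperSet_iInter₂ fun y _ => hUupper y
  · exact mem_iInter₂.2 fun y _ => hxU y
  · intro z hz
    by_contra hzI
    obtain ⟨y, hy1, hy2⟩ := mem_iUnion₂.1 (ht hzI)
    exact hy2 (mem_iInter₂.1 hz y hy1)

/-- In a compact Priestley space `X`, for a family `𝒰` of open upper sets, the
largest open upper set contained in `⋂₀ 𝒰` equals the largest upper set
contained in the interior of `⋂₀ 𝒰`, that is,
`⋃₀ {V : V open upper, V ⊆ ⋂₀ 𝒰} = X \ ↓(X \ interior (⋂₀ 𝒰))`.
This computes the infimum of `𝒰` in the frame of open upper sets. -/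
theorem stmt10 {X : Type*} [TopologicalSpace X] [PartialOrder X] [PriestleySpace X]
    [CompactSpace X] (𝒰 : Set (Set X)) (h𝒰 : ∀ U ∈ 𝒰, IsOpen U ∧ IsUpperSet U) :
    ⋃₀ {V : Set X | IsOpen V ∧ IsUpperSet V ∧ V ⊆ ⋂₀ 𝒰} =
      (lowerClosure (interior (⋂₀ 𝒰))ᶜ : Set X)ᶜ := by
  ext x
  simp only [mem_sUnion, mem_setOf_eq, mem_compl_iff, SetLike.mem_coe,
    lowerClosure, LowerSet.mem_mk, mem_setOf_eq]
  constructor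
  · rintro ⟨V, ⟨hVo, hVu, hVs⟩, hxV⟩ ⟨y, hy, hxy⟩
    exact hy (interior_maximal hVs hVo (hVu hxy hxV))
  · intro h
    have hIci : Ici x ⊆ interior (⋂₀ 𝒰) := by
      intro y hy
      by_contra hy'
      exact h ⟨y, hy', hy⟩
    obtain ⟨V, hVc, hVu, hxV, hVI⟩ := aux_clopen_upper isOpen_interior hIci
    exact ⟨V, ⟨hVc.isOpen, hVu, hVI.trans interior_subset⟩, hxV⟩
end

section
/- Let L be a frame in which every element is the supremum of the compact elements below it and in which the meet of two compact elements is compact (an arithmetic algebraic frame). Write x ≪ y (x is way below y) if for every set S with y ≤ sSup S there is a finite T ⊆ S with x ≤ sSup T. If p ∈ L is pseudoprime, i.e., p ≠ ⊤ and for all a, b ∈ L, a ⊓ b ≪ p implies a ≤ p or b ≤ p, then p is prime: for all a, b ∈ L, a ⊓ b ≤ p implies a ≤ p or b ≤ p. -/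
/-!
A prime test `a ⊓ b ≤ p` only has to be checked on compact `a, b`, since every element is
the join of the compact elements below it. For compact `c, d` the meet `c ⊓ d` is again compact,
and a compact element below `p` is way below `p`, so pseudoprimality applies to `c ⊓ d`.
-/

open CompleteLattice

/-- The way-below relation: `x ≪ y` if for every set `S` with `y ≤ sSup S`
there is a finite `T ⊆ S` with `x ≤ sSup T`. -/
def WayBelow {L : Type*} [CompleteLattice L] (x y : L) : Prop :=
  ∀ S : Set L, y ≤ sSup S → ∃ T : Set L, T ⊆ S ∧ T.Finite ∧ x ≤ sSup T

theorem IsCompactElement.wayBelow_of_le {L : Type*} [CompleteLattice L] {k y : L}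
    (hk : IsCompactElement k) (hky : k ≤ y) : WayBelow k y := by
  intro S hS
  obtain ⟨t, htS, hkt⟩ :=
    (isCompactElement_iff_exists_le_sSup_of_le_sSup (k := k)).1 hk S (hky.trans hS)
  exact ⟨t, htS, t.finite_toSet, by rwa [← Finset.sup_id_eq_sSup]⟩

theorem IsCompactlyGenerated.of_eq_sSup_compact_le {L : Type*} [CompleteLattice L]
    (halg : ∀ x : L, x = sSup {k : L | IsCompactElement k ∧ k ≤ x}) :
    IsCompactlyGenerated L :=
  ⟨fun x => ⟨_, fun _ hk => hk.1, (halg x).symm⟩⟩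

theorem exists_isCompactElement_le_not_le {L : Type*} [CompleteLattice L]
    [IsCompactlyGenerated L] {x p : L} (hxp : ¬x ≤ p) :
    ∃ c, IsCompactElement c ∧ c ≤ x ∧ ¬c ≤ p := by
  simpa [le_iff_compact_le_imp (a := x)] using hxp

theorem stmt12_general {L : Type*} [Order.Frame L]
    (halg : ∀ x : L, x = sSup {k : L | IsCompactElement k ∧ k ≤ x})
    (harith : ∀ x y : L, IsCompactElement x → IsCompactElement y → IsCompactElement (x ⊓ y))
    (p : L)
    (hpseudo : ∀ a b : L, WayBelow (a ⊓ b) p → a ≤ p ∨ b ≤ p) :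
    ∀ a b : L, a ⊓ b ≤ p → a ≤ p ∨ b ≤ p := by
  have := IsCompactlyGenerated.of_eq_sSup_compact_le halg
  intro a b hab
  by_contra! ⟨ha, hb⟩
  obtain ⟨c, hc, hca, hcp⟩ := exists_isCompactElement_le_not_le ha
  obtain ⟨d, hd, hdb, hdp⟩ := exists_isCompactElement_le_not_le hb
  have hcdp : c ⊓ d ≤ p := (inf_le_inf hca hdb).trans hab
  exact (hpseudo c d ((harith c d hc hd).wayBelow_of_le hcdp)).elim hcp hdp

/-- In an arithmetic algebraic frame (every element is the sup of the compact
elements below it, and the meet of two compact elements is compact), every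
pseudoprime element (`p ≠ ⊤` and `a ⊓ b ≪ p` implies `a ≤ p` or `b ≤ p`)
is prime (`a ⊓ b ≤ p` implies `a ≤ p` or `b ≤ p`). -/
theorem stmt12 {L : Type*} [Order.Frame L]
    (halg : ∀ x : L, x = sSup {k : L | IsCompactElement k ∧ k ≤ x})
    (harith : ∀ x y : L, IsCompactElement x → IsCompactElement y → IsCompactElement (x ⊓ y))
    (p : L) (hp : p ≠ ⊤)
    (hpseudo : ∀ a b : L, WayBelow (a ⊓ b) p → a ≤ p ∨ b ≤ p) :
    ∀ a b : L, a ⊓ b ≤ p → a ≤ p ∨ b ≤ p :=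
  stmt12_general halg harith p hpseudo
end
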